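/- For each n ∈ ℤ, W₀(n) := ∫₀¹ p_u(n)/u du is finite for n ≠ 0, and W_∞(n) := ∫₁^∞ p_u(n)/u du is finite for all n ∈ ℤ. -/

import Mathlib

/-!
Near `u = 0` the power series gives `I_k(2u) ≤ u^k e^{u²}`, so for `n ≠ 0` the integrand
`p_u(n) / u` stays bounded on `(0, 1)`.

For large `u`, write the `m`-th term of `I_k(z)` as `C(N, m) (z/2)^N / N!` with `N = 2m + k`.
The central binomial bound `C(N, m) ≤ 2^N / √(N + 1)` and AM-GM in the form
`1 / √(N + 1) ≤ (1 + z / (N + 1)) / (2√z)` dominate it by `(a_N + a_{N+1}) / (2√z)`, where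
`a_N = z^N / N!`. The indices `2m + k` and `2m + 1 + k` are pairwise distinct, so summing gives
`I_k(z) ≤ e^z / (2√z)`. Hence `p_u(n) ≤ (8u)^{-1/2}` and `p_u(n) / u = O(u^{-3/2})` on `(1, ∞)`.
-/

open MeasureTheory Real Set

/-- The modified Bessel function of the first kind of integer order, via its power series. -/
noncomputable def besselI (k : ℕ) (z : ℝ) : ℝ :=
  ∑' m : ℕ, (z/2) ^ (2*m + k) / ((Nat.factorial m : ℝ) * (Nat.factorial (m + k) : ℝ))

/-- The heat kernel of the discrete Laplacian on ℤ: p_u(k) = e^{-2u} I_{|k|}(2u). -/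
noncomputable def discHeat (u : ℝ) (k : ℤ) : ℝ := Real.exp (-2*u) * besselI k.natAbs (2*u)

open scoped Nat

namespace Nat

theorem centralBinom_sq_mul_le (n : ℕ) : centralBinom n ^ 2 * (2 * n + 1) ≤ 16 ^ n := by
  induction n with
  | zero => simp
  | succ n ih =>
    refine Nat.le_of_mul_le_mul_left ?_ (by positivity : 0 < (n + 1) ^ 2)
    calc (n + 1) ^ 2 * (centralBinom (n + 1) ^ 2 * (2 * (n + 1) + 1))
        = ((n + 1) * centralBinom (n + 1)) ^ 2 * (2 * n + 3) := by ring
      _ = 4 * (2 * n + 1) * (2 * n + 3) * (centralBinom n ^ 2 * (2 * n + 1)) := by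
          rw [succ_mul_centralBinom_succ]; ring
      _ ≤ 16 * (n + 1) ^ 2 * 16 ^ n := Nat.mul_le_mul (by nlinarith) ih
      _ = (n + 1) ^ 2 * 16 ^ (n + 1) := by ring

theorem choose_sq_mul_le (n k : ℕ) : n.choose k ^ 2 * (n + 1) ≤ 4 ^ n := by
  suffices n.choose (n / 2) ^ 2 * (n + 1) ≤ 4 ^ n from
    le_trans (by gcongr; exact choose_le_middle k n) this
  obtain ⟨m, rfl | rfl⟩ := even_or_odd' n
  · rw [show 2 * m / 2 = m by omega, ← centralBinom_eq_two_mul_choose, pow_mul]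
    exact centralBinom_sq_mul_le m
  · have hmid : 2 * (2 * m + 1).choose m = centralBinom (m + 1) := by
      rw [centralBinom_eq_two_mul_choose, show 2 * (m + 1) = (2 * m + 1) + 1 by ring,
        choose_succ_succ, choose_symm_half, two_mul]
    have h := centralBinom_sq_mul_le (m + 1)
    rw [← hmid] at h
    rw [show (2 * m + 1) / 2 = m by omega]
    refine Nat.le_of_mul_le_mul_left ?_ (by norm_num : 0 < 4)
    calc 4 * ((2 * m + 1).choose m ^ 2 * (2 * m + 1 + 1))
        ≤ (2 * (2 * m + 1).choose m) ^ 2 * (2 * (m + 1) + 1) := by ring_nf; omega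
      _ ≤ 16 ^ (m + 1) := h
      _ = 4 * 4 ^ (2 * m + 1) := by rw [pow_succ, pow_succ, pow_mul]; ring

theorem choose_le_two_pow_div_sqrt (n k : ℕ) : (n.choose k : ℝ) ≤ 2 ^ n / √(n + 1) := by
  rw [le_div_iff₀ (by positivity), ← Real.sqrt_sq (by positivity : (0 : ℝ) ≤ n.choose k),
    ← Real.sqrt_mul (by positivity), ← Real.sqrt_sq (by positivity : (0 : ℝ) ≤ 2 ^ n)]
  gcongr
  rw [← pow_mul, mul_comm n, pow_mul]
  norm_num
  exact_mod_cast choose_sq_mul_le n k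

end Nat

theorem inv_sqrt_le_one_add_div {x y : ℝ} (hx : 0 < x) (hy : 0 < y) :
    (√y)⁻¹ ≤ (1 + x / y) / (2 * √x) := by
  obtain ⟨r, hr, rfl⟩ : ∃ r, 0 < r ∧ r ^ 2 = x := ⟨√x, by positivity, Real.sq_sqrt hx.le⟩
  obtain ⟨s, hs, rfl⟩ : ∃ s, 0 < s ∧ s ^ 2 = y := ⟨√y, by positivity, Real.sq_sqrt hy.le⟩
  rw [Real.sqrt_sq hr.le, Real.sqrt_sq hs.le, inv_eq_one_div, div_le_div_iff₀ hs (by positivity)]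
  field_simp
  nlinarith [sq_nonneg (r - s)]

theorem Real.hasSum_pow_div_factorial (x : ℝ) : HasSum (fun n => x ^ n / n !) (exp x) := by
  rw [exp_eq_exp_ℝ]
  exact NormedSpace.expSeries_div_hasSum_exp x

noncomputable def besselITerm (k : ℕ) (z : ℝ) (m : ℕ) : ℝ :=
  (z / 2) ^ (2 * m + k) / ((m ! : ℝ) * ((m + k)! : ℝ))

theorem besselI_eq_tsum (k : ℕ) (z : ℝ) : besselI k z = ∑' m, besselITerm k z m := rfl

theorem besselITerm_nonneg (k : ℕ) {z : ℝ} (hz : 0 ≤ z) (m : ℕ) : 0 ≤ besselITerm k z m := by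
  unfold besselITerm; positivity

theorem besselI_nonneg (k : ℕ) {z : ℝ} (hz : 0 ≤ z) : 0 ≤ besselI k z :=
  tsum_nonneg (besselITerm_nonneg k hz)

theorem measurable_besselI (k : ℕ) : Measurable (besselI k) :=
  Measurable.tsum fun m => by fun_prop

theorem norm_besselITerm_le (k : ℕ) (z : ℝ) (m : ℕ) :
    ‖besselITerm k z m‖ ≤ |z / 2| ^ k * (((z / 2) ^ 2) ^ m / m !) := by
  have hpow : ‖(z / 2) ^ (2 * m + k)‖ = |z / 2| ^ k * ((z / 2) ^ 2) ^ m := by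
    rw [norm_pow, Real.norm_eq_abs, ← sq_abs (z / 2), ← pow_mul, ← pow_add, add_comm]
  rw [besselITerm, norm_div, hpow, norm_mul, RCLike.norm_natCast, RCLike.norm_natCast,
    mul_div_assoc]
  gcongr
  exact le_mul_of_one_le_right (by positivity) (by exact_mod_cast (m + k).factorial_pos)

theorem abs_besselI_le (k : ℕ) (z : ℝ) : |besselI k z| ≤ |z / 2| ^ k * exp ((z / 2) ^ 2) := by
  rw [← Real.norm_eq_abs, besselI_eq_tsum]
  exact tsum_of_norm_bounded ((hasSum_pow_div_factorial _).mul_left _) (norm_besselITerm_le k z)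

theorem besselITerm_eq_choose_mul (k : ℕ) (z : ℝ) (m : ℕ) :
    besselITerm k z m = (2 * m + k).choose m * (z / 2) ^ (2 * m + k) / (2 * m + k)! := by
  have h := Nat.add_choose_mul_factorial_mul_factorial (m + k) m
  rw [show m + k + m = 2 * m + k by ring] at h
  have hchoose : (0 : ℝ) < (2 * m + k).choose m := by exact_mod_cast Nat.choose_pos (by omega)
  rw [besselITerm, ← h]
  push_cast
  field_simp

theorem hasSum_even_add_odd_shift {a : ℕ → ℝ} (ha : Summable a) (k : ℕ) :
    HasSum (fun m => a (2 * m + k) + a (2 * m + 1 + k)) (∑' n, a (n + k)) := by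
  have hshift : Summable fun n => a (n + k) := (summable_nat_add_iff k).2 ha
  have heven : Summable fun m => a (2 * m + k) :=
    hshift.comp_injective (mul_right_injective₀ two_ne_zero)
  have hodd : Summable fun m => a (2 * m + 1 + k) :=
    hshift.comp_injective fun _ _ h => by simp_all
  rw [← tsum_even_add_odd (f := fun n => a (n + k)) heven hodd]
  exact heven.hasSum.add hodd.hasSum

theorem besselI_le_exp_div_sqrt (k : ℕ) {z : ℝ} (hz : 0 < z) :
    besselI k z ≤ exp z / (2 * √z) := by
  set a : ℕ → ℝ := fun n => z ^ n / (n ! : ℝ)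
  have ha0 : 0 ≤ a := fun n => by positivity
  have hterm : ∀ m, besselITerm k z m ≤ (a (2 * m + k) + a (2 * m + 1 + k)) / (2 * √z) := by
    intro m
    set n := 2 * m + k
    calc besselITerm k z m = n.choose m * (z / 2) ^ n / (n ! : ℝ) :=
          besselITerm_eq_choose_mul k z m
      _ ≤ 2 ^ n / √(n + 1) * (z / 2) ^ n / (n ! : ℝ) := by
          gcongr; exact Nat.choose_le_two_pow_div_sqrt n m
      _ = a n * (√(n + 1))⁻¹ := by simp only [a, div_pow]; field_simp
      _ ≤ a n * ((1 + z / (n + 1)) / (2 * √z)) := by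
          gcongr; exact inv_sqrt_le_one_add_div hz (by positivity)
      _ = (a n + a (2 * m + 1 + k)) / (2 * √z) := by
          rw [show 2 * m + 1 + k = n + 1 by omega]
          simp only [a, Nat.factorial_succ, pow_succ]
          push_cast
          field_simp
  have hexp := hasSum_pow_div_factorial z
  have hpairs := hasSum_even_add_odd_shift hexp.summable k
  have hbound := hpairs.summable.div_const (2 * √z)
  calc besselI k z = ∑' m, besselITerm k z m := besselI_eq_tsum k z
    _ ≤ ∑' m, (a (2 * m + k) + a (2 * m + 1 + k)) / (2 * √z) :=
        (hbound.of_nonneg_of_le (besselITerm_nonneg k hz.le) hterm).tsum_le_tsum hterm hbound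
    _ = (∑' n, a (n + k)) / (2 * √z) := by rw [tsum_div_const, hpairs.tsum_eq]
    _ ≤ exp z / (2 * √z) := by
        gcongr
        rw [← hexp.tsum_eq]
        exact ((summable_nat_add_iff k).2 hexp.summable).tsum_le_tsum_of_inj (· + k)
          (add_left_injective k) (fun n _ => ha0 n) (fun _ => le_rfl) hexp.summable

theorem measurable_discHeat (n : ℤ) : Measurable fun u => discHeat u n :=
  (measurable_exp.comp (by fun_prop)).mul ((measurable_besselI _).comp (by fun_prop))

theorem discHeat_nonneg {u : ℝ} (hu : 0 ≤ u) (n : ℤ) : 0 ≤ discHeat u n :=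
  mul_nonneg (exp_nonneg _) (besselI_nonneg _ (by positivity))

theorem abs_discHeat_le (u : ℝ) (n : ℤ) :
    |discHeat u n| ≤ |u| ^ n.natAbs * exp (u ^ 2 - 2 * u) := by
  have h := abs_besselI_le n.natAbs (2 * u)
  rw [mul_div_cancel_left₀ u two_ne_zero] at h
  rw [discHeat, abs_mul, abs_of_pos (exp_pos _), sub_eq_add_neg, exp_add, neg_mul]
  calc exp (-(2 * u)) * |besselI n.natAbs (2 * u)|
      ≤ exp (-(2 * u)) * (|u| ^ n.natAbs * exp (u ^ 2)) := by gcongr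
    _ = _ := by ring

theorem discHeat_le_inv_sqrt {u : ℝ} (hu : 0 < u) (n : ℤ) :
    discHeat u n ≤ (2 * √(2 * u))⁻¹ := by
  calc discHeat u n ≤ exp (-2 * u) * (exp (2 * u) / (2 * √(2 * u))) := by
        rw [discHeat]; gcongr; exact besselI_le_exp_div_sqrt _ (by positivity)
    _ = (2 * √(2 * u))⁻¹ := by rw [mul_div, ← exp_add]; simp

theorem norm_discHeat_div_le_one {u : ℝ} (hu0 : 0 < u) (hu1 : u < 1) {n : ℤ} (hn : n ≠ 0) :
    ‖discHeat u n / u‖ ≤ 1 := by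
  have hpow : u ^ n.natAbs ≤ u := pow_le_of_le_one hu0.le hu1.le (Int.natAbs_ne_zero.2 hn)
  have hexp : exp (u ^ 2 - 2 * u) ≤ 1 := exp_le_one_iff.2 (by nlinarith)
  rw [norm_div, Real.norm_eq_abs, Real.norm_eq_abs, abs_of_pos hu0, div_le_one hu0]
  calc |discHeat u n| ≤ |u| ^ n.natAbs * exp (u ^ 2 - 2 * u) := abs_discHeat_le u n
    _ ≤ u * 1 := by rw [abs_of_pos hu0]; gcongr
    _ = u := mul_one u

theorem norm_discHeat_div_le_rpow {u : ℝ} (hu : 0 < u) (n : ℤ) :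
    ‖discHeat u n / u‖ ≤ u ^ (-3 / 2 : ℝ) := by
  have hrpow : u ^ (-3 / 2 : ℝ) = (u * √u)⁻¹ := by
    rw [show (-3 / 2 : ℝ) = -(1 + 1 / 2) by norm_num, rpow_neg hu.le, rpow_add hu, rpow_one,
      sqrt_eq_rpow]
  rw [norm_div, Real.norm_eq_abs, Real.norm_eq_abs, abs_of_pos hu,
    abs_of_nonneg (discHeat_nonneg hu.le n), hrpow, div_eq_mul_inv, mul_inv, mul_comm]
  gcongr
  calc discHeat u n ≤ (2 * √(2 * u))⁻¹ := discHeat_le_inv_sqrt hu n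
    _ ≤ (√u)⁻¹ := by
        gcongr
        linarith [sqrt_le_sqrt (by linarith : u ≤ 2 * u), sqrt_nonneg (2 * u)]

theorem aestronglyMeasurable_discHeat_div (n : ℤ) {μ : Measure ℝ} :
    AEStronglyMeasurable (fun u => discHeat u n / u) μ :=
  ((measurable_discHeat n).div measurable_id).aestronglyMeasurable

theorem integrableOn_discHeat_div_Ioo {n : ℤ} (hn : n ≠ 0) :
    IntegrableOn (fun u => discHeat u n / u) (Ioo 0 1) := by
  refine Measure.integrableOn_of_bounded (M := 1) measure_Ioo_lt_top.ne
    (aestronglyMeasurable_discHeat_div n) ?_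
  filter_upwards [ae_restrict_mem measurableSet_Ioo] with u ⟨hu0, hu1⟩
  exact norm_discHeat_div_le_one hu0 hu1 hn

theorem integrableOn_discHeat_div_Ioi (n : ℤ) :
    IntegrableOn (fun u => discHeat u n / u) (Ioi 1) := by
  refine (integrableOn_Ioi_rpow_of_lt (by norm_num : (-3 / 2 : ℝ) < -1) one_pos).mono'
    (aestronglyMeasurable_discHeat_div n) ?_
  filter_upwards [ae_restrict_mem measurableSet_Ioi] with u hu
  exact norm_discHeat_div_le_rpow (one_pos.trans hu) n

theorem stmt14 (n : ℤ) :
    (n ≠ 0 → IntegrableOn (fun u => discHeat u n / u) (Ioo (0:ℝ) 1)) ∧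
    IntegrableOn (fun u => discHeat u n / u) (Ioi (1:ℝ)) :=
  ⟨integrableOn_discHeat_div_Ioo, integrableOn_discHeat_div_Ioi n⟩
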